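/- arXiv:2602.20863 — 6 statements merged into one kernel-verified Lean document; each statement's English description precedes it below -/
import Mathlib

section
/- Let X be a real Banach space and f : X → ℝ a C² function; write df for its Fréchet derivative and d²f(y)[ξ,η] := (D(Df)(y)ξ)η for its second derivative. Let x̄ ∈ X satisfy df(x̄) = 0. Let P⁻, P⁺ : X → X be continuous linear projections with P⁻ + P⁺ = id and P⁻ ∘ P⁺ = 0, let N be a continuous seminorm on X with N(x) > 0 for every x ≠ 0, and suppose there exist r > 0 and c > 0 such that for every y ∈ X with ‖y − x̄‖ < r one has d²f(y)[ξ,ξ] ≥ c·N(ξ)² for all ξ in the range of P⁺ and d²f(y)[ξ,ξ] ≤ −c·N(ξ)² for all ξ in the range of P⁻. Then for every x ∈ X with 0 < ‖x‖ < r one has df(x̄ + x)[P⁻x − P⁺x] ≤ −c·(N(P⁻x)² + N(P⁺x)²) < 0; in particular, x̄ is the only critical point of f in the open ball of radius r centered at x̄. -/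
/-!
Along the segment `t ↦ xc + t • x`, with `x = P⁻x + P⁺x` and `v = P⁻x − P⁺x`, the derivative of
`t ↦ df(xc + t • x)[v]` is `d²f[x, v] = d²f[P⁻x, P⁻x] − d²f[P⁺x, P⁺x]` by symmetry of `d²f`, and
this is `≤ −c (N(P⁻x)² + N(P⁺x)²)` throughout the ball. Since `df(xc) = 0`, the mean value
inequality gives the bound on `df(xc + x)[v]`, which is negative because `N` is definite.
-/

open Set

theorem IsSymmSndFDerivAt.fderiv_fderiv_add_sub {𝕜 E F : Type*} [NontriviallyNormedField 𝕜]
    [NormedAddCommGroup E] [NormedSpace 𝕜 E] [NormedAddCommGroup F] [NormedSpace 𝕜 F]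
    {f : E → F} {y : E} (hf : IsSymmSndFDerivAt 𝕜 f y) (a b : E) :
    fderiv 𝕜 (fderiv 𝕜 f) y (a + b) (a - b) =
      fderiv 𝕜 (fderiv 𝕜 f) y a a - fderiv 𝕜 (fderiv 𝕜 f) y b b := by
  simp only [map_add, map_sub, add_apply, hf a b]
  abel

theorem clm_apply_sub_le_of_fderiv_apply_le {E F : Type*} [NormedAddCommGroup E]
    [NormedSpace ℝ E] [NormedAddCommGroup F] [NormedSpace ℝ F]
    {g : E → F →L[ℝ] ℝ} (hg : Differentiable ℝ g) (y x : E) (v : F) {C : ℝ}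
    (hC : ∀ t ∈ Icc (0 : ℝ) 1, fderiv ℝ g (y + t • x) x v ≤ C) :
    g (y + x) v - g y v ≤ C := by
  have hφ : ∀ t : ℝ,
      HasDerivAt (fun s : ℝ => g (y + s • x) v) (fderiv ℝ g (y + t • x) x v) t := by
    intro t
    have hline : HasDerivAt (fun s : ℝ => y + s • x) x t := by
      simpa using ((hasDerivAt_id t).smul_const x).const_add y
    simpa using ((hg _).hasFDerivAt.comp_hasDerivAt t hline).clm_apply (hasDerivAt_const t v)
  have := (convex_Icc (0 : ℝ) 1).image_sub_le_mul_sub_of_deriv_le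
    (fun t _ => (hφ t).continuousAt.continuousWithinAt)
    (fun t _ => (hφ t).differentiableAt.differentiableWithinAt)
    (fun t ht => (hφ t).deriv ▸ hC t (interior_subset ht)) 0 (by simp) 1 (by simp) zero_le_one
  simpa using this

theorem Seminorm.sq_add_sq_pos {E : Type*} [AddCommGroup E] [Module ℝ E] (N : Seminorm ℝ E)
    {a b : E} (hab : 0 < N (a + b)) : 0 < N a ^ 2 + N b ^ 2 := by
  have hsum : 0 < N a + N b := hab.trans_le (map_add_le_add N a b)
  nlinarith [mul_pos hsum hsum, sq_nonneg (N a - N b)]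

theorem norm_add_smul_sub_lt_of_mem_Icc {E : Type*} [SeminormedAddCommGroup E]
    [NormedSpace ℝ E] {y x : E} {r t : ℝ} (hx : ‖x‖ < r) (ht : t ∈ Icc (0 : ℝ) 1) : ‖y + t • x - y‖ < r := by
  rw [add_sub_cancel_left, norm_smul, Real.norm_of_nonneg ht.1]
  exact (mul_le_of_le_one_left (norm_nonneg x) ht.2).trans_lt hx

theorem stmt0_general {X : Type*} [NormedAddCommGroup X] [NormedSpace ℝ X]
    (f : X → ℝ) (hf : ContDiff ℝ 2 f)
    (xc : X) (hcrit : fderiv ℝ f xc = 0)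
    (Pm Pp : X →L[ℝ] X)
    (hsum : ∀ x : X, Pm x + Pp x = x)
    (N : Seminorm ℝ X) (hNpos : ∀ x : X, x ≠ 0 → 0 < N x)
    (r c : ℝ) (hc : 0 < c)
    (hplus : ∀ y : X, ‖y - xc‖ < r → ∀ ξ ∈ Set.range Pp,
      c * (N ξ) ^ 2 ≤ fderiv ℝ (fderiv ℝ f) y ξ ξ)
    (hminus : ∀ y : X, ‖y - xc‖ < r → ∀ ξ ∈ Set.range Pm,
      fderiv ℝ (fderiv ℝ f) y ξ ξ ≤ -(c * (N ξ) ^ 2)) :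
    (∀ x : X, 0 < ‖x‖ → ‖x‖ < r →
      fderiv ℝ f (xc + x) (Pm x - Pp x) ≤ -(c * ((N (Pm x)) ^ 2 + (N (Pp x)) ^ 2)) ∧
      fderiv ℝ f (xc + x) (Pm x - Pp x) < 0) ∧
    (∀ x : X, ‖x - xc‖ < r → fderiv ℝ f x = 0 → x = xc) := by
  have hdf : Differentiable ℝ (fderiv ℝ f) := (hf.fderiv_right le_rfl).differentiable one_ne_zero
  have key : ∀ x : X, 0 < ‖x‖ → ‖x‖ < r →
      fderiv ℝ f (xc + x) (Pm x - Pp x) ≤ -(c * ((N (Pm x)) ^ 2 + (N (Pp x)) ^ 2)) ∧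
      fderiv ℝ f (xc + x) (Pm x - Pp x) < 0 := by
    intro x hx0 hxr
    have hle : fderiv ℝ f (xc + x) (Pm x - Pp x) ≤ -(c * ((N (Pm x)) ^ 2 + (N (Pp x)) ^ 2)) := by
      have hmvt := clm_apply_sub_le_of_fderiv_apply_le hdf xc x (Pm x - Pp x)
        (C := -(c * ((N (Pm x)) ^ 2 + (N (Pp x)) ^ 2))) fun t ht => by
          have hy := norm_add_smul_sub_lt_of_mem_Icc (y := xc) hxr ht
          have hD := ((hf.contDiffAt (x := xc + t • x)).isSymmSndFDerivAt
            (by simp)).fderiv_fderiv_add_sub (Pm x) (Pp x)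
          rw [hsum] at hD
          linarith [hminus _ hy (Pm x) ⟨x, rfl⟩, hplus _ hy (Pp x) ⟨x, rfl⟩]
      simpa [hcrit] using hmvt
    have hpos : 0 < N (Pm x) ^ 2 + N (Pp x) ^ 2 :=
      N.sq_add_sq_pos (hNpos _ (by rw [hsum]; exact norm_pos_iff.mp hx0))
    exact ⟨hle, hle.trans_lt (neg_neg_of_pos (mul_pos hc hpos))⟩
  refine ⟨key, fun x hxr hfx => ?_⟩
  by_contra hne
  have := (key (x - xc) (norm_pos_iff.mpr (sub_ne_zero.mpr hne)) hxr).2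
  simp [hfx] at this

/-- If the second differential of a `C²` functional `f` is uniformly positive
(resp. negative) definite, with respect to a (possibly weaker) continuous seminorm `N`,
on the range of `P⁺` (resp. `P⁻`) at every point of the ball of radius `r` around the
critical point `xc`, then `df(xc + x)[P⁻x − P⁺x] ≤ −c(N(P⁻x)² + N(P⁺x)²) < 0` for all
`0 < ‖x‖ < r`; in particular `xc` is the unique critical point of `f` in that ball. -/
theorem stmt0 {X : Type*} [NormedAddCommGroup X] [NormedSpace ℝ X] [CompleteSpace X]
    (f : X → ℝ) (hf : ContDiff ℝ 2 f)
    (xc : X) (hcrit : fderiv ℝ f xc = 0)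
    (Pm Pp : X →L[ℝ] X)
    (hsum : ∀ x : X, Pm x + Pp x = x)
    (hcomp : ∀ x : X, Pm (Pp x) = 0)
    (N : Seminorm ℝ X) (hNcont : Continuous N) (hNpos : ∀ x : X, x ≠ 0 → 0 < N x)
    (r c : ℝ) (hr : 0 < r) (hc : 0 < c)
    (hplus : ∀ y : X, ‖y - xc‖ < r → ∀ ξ ∈ Set.range Pp,
      c * (N ξ) ^ 2 ≤ fderiv ℝ (fderiv ℝ f) y ξ ξ)
    (hminus : ∀ y : X, ‖y - xc‖ < r → ∀ ξ ∈ Set.range Pm,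
      fderiv ℝ (fderiv ℝ f) y ξ ξ ≤ -(c * (N ξ) ^ 2)) :
    (∀ x : X, 0 < ‖x‖ → ‖x‖ < r →
      fderiv ℝ f (xc + x) (Pm x - Pp x) ≤ -(c * ((N (Pm x)) ^ 2 + (N (Pp x)) ^ 2)) ∧
      fderiv ℝ f (xc + x) (Pm x - Pp x) < 0) ∧
    (∀ x : X, ‖x - xc‖ < r → fderiv ℝ f x = 0 → x = xc) :=
  stmt0_general f hf xc hcrit Pm Pp hsum N hNpos r c hc hplus hminus
end

section
/- Let H be a real Hilbert space and let V, W ⊆ H be closed subspaces, with orthogonal projections P_V and P_W onto V and W respectively. If the difference P_V − P_W is a compact operator, then both intersections V ∩ W^⊥ and W ∩ V^⊥ are finite-dimensional subspaces of H. (In particular, the relative dimension dim(W, V) := dim(W^⊥ ∩ V) − dim(W ∩ V^⊥) is a well-defined integer.) -/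
/-!
`P_V - P_W` is the identity on `V ∩ W^⊥` and minus the identity on `W ∩ V^⊥`. A compact operator
maps some neighbourhood of zero into a compact set; if it fixes a subspace pointwise, the trace of
that neighbourhood on the subspace is totally bounded, so the subspace is finite dimensional by
Riesz's theorem.
-/

open Topology

theorem Submodule.finiteDimensional_of_isCompactOperator_of_eqOn {𝕜 E : Type*}
    [NontriviallyNormedField 𝕜] [CompleteSpace 𝕜] [AddCommGroup E] [Module 𝕜 E] [UniformSpace E]
    [T2Space E] [IsUniformAddGroup E] [ContinuousSMul 𝕜 E] (U : Submodule 𝕜 E) {f : E → E}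
    (hf : IsCompactOperator f) (hfU : Set.EqOn f id U) : FiniteDimensional 𝕜 U := by
  obtain ⟨K, hK, hfK⟩ := hf
  have h_nhds : ((↑) : U → E) ⁻¹' K ∈ 𝓝 (0 : U) := by
    refine Filter.mem_of_superset (continuous_subtype_val.tendsto (0 : U) hfK) ?_
    intro x hx
    simpa [hfU x.2] using hx
  have : IsUniformAddGroup U := U.toAddSubgroup.isUniformAddGroup
  exact .of_totallyBounded_nhds_zero 𝕜 h_nhds
    (totallyBounded_preimage isUniformEmbedding_subtype_val.isUniformInducing hK.totallyBounded)

theorem Submodule.orthogonalProjectionOnto_sub_orthogonalProjectionOnto_of_mem_inf_orthogonal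
    {𝕜 E : Type*} [RCLike 𝕜] [NormedAddCommGroup E] [InnerProductSpace 𝕜 E]
    {V W : Submodule 𝕜 E} [V.HasOrthogonalProjection] [W.HasOrthogonalProjection] {x : E}
    (hx : x ∈ V ⊓ Wᗮ) :
    (V.orthogonalProjectionOnto x : E) - W.orthogonalProjectionOnto x = x := by
  rw [W.orthogonalProjectionOnto_apply_of_mem_orthogonal hx.2, Submodule.coe_zero, sub_zero,
    Submodule.coe_orthogonalProjectionOnto_apply, V.starProjection_eq_self_iff.mpr hx.1]

theorem stmt1_general {H : Type*} [NormedAddCommGroup H] [InnerProductSpace ℝ H]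
    (V W : Submodule ℝ H) [CompleteSpace V] [CompleteSpace W]
    (hK : IsCompactOperator (fun x : H =>
      ((V.orthogonalProjectionOnto x : H) - (W.orthogonalProjectionOnto x : H)))) :
    FiniteDimensional ℝ (V ⊓ Wᗮ : Submodule ℝ H) ∧
    FiniteDimensional ℝ (W ⊓ Vᗮ : Submodule ℝ H) := by
  constructor
  · exact Submodule.finiteDimensional_of_isCompactOperator_of_eqOn _ hK fun _ hx =>
      Submodule.orthogonalProjectionOnto_sub_orthogonalProjectionOnto_of_mem_inf_orthogonal hx
  · refine Submodule.finiteDimensional_of_isCompactOperator_of_eqOn _ hK.neg fun x hx => ?_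
    rw [Pi.neg_apply, neg_sub]
    exact Submodule.orthogonalProjectionOnto_sub_orthogonalProjectionOnto_of_mem_inf_orthogonal hx

/-- If the difference of the orthogonal projections onto two closed subspaces
`V`, `W` of a real Hilbert space is a compact operator, then `V ∩ W^⊥` and `W ∩ V^⊥` are
finite dimensional. -/
theorem stmt1 {H : Type*} [NormedAddCommGroup H] [InnerProductSpace ℝ H] [CompleteSpace H]
    (V W : Submodule ℝ H) [CompleteSpace V] [CompleteSpace W]
    (hK : IsCompactOperator (fun x : H =>
      ((V.orthogonalProjectionOnto x : H) - (W.orthogonalProjectionOnto x : H)))) :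
    FiniteDimensional ℝ (V ⊓ Wᗮ : Submodule ℝ H) ∧
    FiniteDimensional ℝ (W ⊓ Vᗮ : Submodule ℝ H) :=
  stmt1_general V W hK
end

section
/- Let X be a real Banach space, and let P, Q : X → X be continuous linear projections (P ∘ P = P and Q ∘ Q = Q) such that P − Q is a compact operator. Then (range P, ker Q) is a Fredholm pair: the intersection range(P) ∩ ker(Q) is finite-dimensional, the sum range(P) + ker(Q) is a closed subspace of X, and the quotient space X / (range(P) + ker(Q)) is finite-dimensional. -/
/-!
For a compact operator `k` on a Banach space, the Riesz theory of `1 - k` gives a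
finite-dimensional kernel and a closed range of finite codimension. Both halves of the Fredholm
pair are reduced to it: `range P ⊓ ker Q` lies in the kernel of `1 - (P - Q) P`, and
`range P ⊔ ker Q` contains the range of `1 - (Q - P) Q`, since `(1 - (Q - P) Q) y = P (Q y) +
(y - Q y)`. A subspace containing a closed subspace of finite codimension is itself closed and of
finite codimension.
-/

open Filter Topology

namespace IsCompactOperator

section TopologicalVectorSpace

variable {𝕜 X : Type*} [NontriviallyNormedField 𝕜] [CompleteSpace 𝕜]
  [AddCommGroup X] [Module 𝕜 X] [TopologicalSpace X] [IsTopologicalAddGroup X]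
  [ContinuousSMul 𝕜 X] {k : X →L[𝕜] X}

theorem finiteDimensional_ker_one_sub [T2Space X] (hk : IsCompactOperator k) :
    FiniteDimensional 𝕜 (1 - k : X →L[𝕜] X).ker := by
  have hkN : ∀ x ∈ (1 - k : X →L[𝕜] X).ker, k x = x := fun x hx => (sub_eq_zero.mp hx).symm
  have hid : ⇑((k : X →ₗ[𝕜] X).restrict fun x hx => (hkN x hx).symm ▸ hx) = id :=
    funext fun x => Subtype.ext (hkN x x.2)
  apply FiniteDimensional.of_isCompactOperator_id
  rw [← hid]
  exact hk.restrict _ (ContinuousLinearMap.isClosed_ker (1 - k))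

theorem finiteDimensional_quotient_of_range_one_sub_le (hk : IsCompactOperator k)
    {S : Submodule 𝕜 X} (hS : IsClosed (S : Set X)) (hkS : (1 - k : X →L[𝕜] X).range ≤ S) :
    FiniteDimensional 𝕜 (X ⧸ S) := by
  have hmk : ∀ x, S.mkQ (k x) = S.mkQ x := fun x => by
    rw [eq_comm, ← sub_eq_zero, ← map_sub, Submodule.mkQ_apply, Submodule.Quotient.mk_eq_zero]
    exact hkS ⟨x, rfl⟩
  obtain ⟨K, hK, hkK⟩ := hk
  -- The identity of `X ⧸ S` factors through `k`, hence is compact.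
  apply FiniteDimensional.of_isCompactOperator_id
  refine ⟨S.mkQ '' K, hK.image S.isOpenQuotientMap_mkQ.continuous, ?_⟩
  have hnhds : S.mkQ '' (k ⁻¹' K) ∈ 𝓝 (S.mkQ 0) :=
    S.isOpenQuotientMap_mkQ.isOpenMap.image_mem_nhds hkK
  rw [map_zero] at hnhds
  refine mem_of_superset hnhds ?_
  rintro _ ⟨x, hx, rfl⟩
  exact ⟨k x, hx, hmk x⟩

end TopologicalVectorSpace

section Normed

variable {𝕜 X : Type*} [NontriviallyNormedField 𝕜] [NormedAddCommGroup X] [NormedSpace 𝕜 X]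
  {k : X →L[𝕜] X}

theorem exists_tendsto_subseq_of_tendsto_one_sub (hk : IsCompactOperator k) {z : ℕ → X} {r : ℝ}
    (hz : ∀ n, ‖z n‖ ≤ r) (hkz : Tendsto (fun n => (1 - k) (z n)) atTop (𝓝 0)) :
    ∃ v, (1 - k) v = 0 ∧ ∃ φ : ℕ → ℕ, StrictMono φ ∧ Tendsto (fun n => z (φ n)) atTop (𝓝 v) := by
  obtain ⟨C, hC, hkC⟩ := hk.image_closedBall_subset_compact r
  obtain ⟨v, -, φ, hφ, hkzv⟩ := hC.tendsto_subseq fun n =>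
    hkC ⟨z n, mem_closedBall_zero_iff.mpr (hz n), rfl⟩
  have hTzφ := hkz.comp hφ.tendsto_atTop
  have hzv : Tendsto (fun n => z (φ n)) atTop (𝓝 v) := by
    simpa using hTzφ.add hkzv
  exact ⟨v, tendsto_nhds_unique (((1 - k).continuous.tendsto v).comp hzv) hTzφ, φ, hφ, hzv⟩

end Normed

section RCLike

variable {𝕜 X : Type*} [RCLike 𝕜] [NormedAddCommGroup X] [NormedSpace 𝕜 X] {k : X →L[𝕜] X}

theorem antilipschitz_one_sub_comp_subtypeL (hk : IsCompactOperator k) {M : Submodule 𝕜 X}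
    (hM : IsClosed (M : Set X)) (hMk : Disjoint M (1 - k : X →L[𝕜] X).ker) :
    ∃ K, AntilipschitzWith K ((1 - k) ∘L M.subtypeL) := by
  by_contra! hK
  have hz : ∀ n : ℕ, ∃ z : M, ‖z‖ = 1 ∧ ‖(1 - k) z‖ < 1 / (n + 1) := fun n => by
    by_contra! h
    refine hK (n + 1) (antilipschitz_of_bound_of_norm_one _ fun z hz => ?_)
    rw [NNReal.coe_add, NNReal.coe_one, NNReal.coe_natCast]
    exact (div_le_iff₀' (by positivity)).mp (h z hz)
  choose z hz1 hkz using hz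
  obtain ⟨v, hv, φ, -, hzv⟩ := hk.exists_tendsto_subseq_of_tendsto_one_sub (z := fun n => z n)
    (r := 1) (fun n => (hz1 n).le) (squeeze_zero_norm (fun n => (hkz n).le)
      tendsto_one_div_add_atTop_nhds_zero_nat)
  have hvM : v ∈ M := hM.mem_of_tendsto hzv (Eventually.of_forall fun n => (z (φ n)).2)
  have hv1 : ‖v‖ = 1 :=
    tendsto_nhds_unique hzv.norm (by simp only [Submodule.norm_coe, hz1, tendsto_const_nhds])
  have : v = 0 := (Submodule.disjoint_def.mp hMk) v hvM hv
  simp [this] at hv1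

variable [CompleteSpace X]

theorem isClosed_range_one_sub (hk : IsCompactOperator k) :
    IsClosed ((1 - k : X →L[𝕜] X).range : Set X) := by
  have := hk.finiteDimensional_ker_one_sub
  obtain ⟨M, hNM⟩ := (Submodule.ClosedComplemented.of_finiteDimensional
    (1 - k : X →L[𝕜] X).ker).exists_isTopCompl
  have hM : IsClosed (M : Set X) := hNM.isClosed'
  have : M.CoFG := (Module.Finite.iff_fg.mp this).cofg_of_isCompl hNM.isCompl
  have : CompleteSpace M := hM.completeSpace_coe
  obtain ⟨K, hK⟩ := hk.antilipschitz_one_sub_comp_subtypeL hM hNM.isCompl.disjoint.symm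
  apply LinearMap.isClosed_range_of_isClosed_map_of_finiteDimensional_quotient (s := M)
  have := hK.isClosed_range ((1 - k) ∘L M.subtypeL).uniformContinuous
  rwa [ContinuousLinearMap.coe_comp, Set.range_comp, Submodule.coe_subtypeL,
    Submodule.coe_subtype, Subtype.range_coe] at this

end RCLike

end IsCompactOperator

namespace Module.End

variable {R M : Type*} [Ring R] [AddCommGroup M] [Module R M] {P Q : Module.End R M}

theorem range_inf_ker_le_ker_one_sub_sub_mul (hP : IsIdempotentElem P) :
    P.range ⊓ Q.ker ≤ (1 - (P - Q) * P).ker := by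
  rintro x ⟨hxP, hxQ⟩
  have hPx : P x = x := (LinearMap.IsIdempotentElem.mem_range_iff hP).mp hxP
  simp [hPx, LinearMap.mem_ker.mp hxQ]

theorem range_one_sub_sub_mul_le_range_sup_ker (hQ : IsIdempotentElem Q) :
    (1 - (Q - P) * Q).range ≤ P.range ⊔ Q.ker := by
  rintro _ ⟨y, rfl⟩
  have hQQ : Q (Q y) = Q y := LinearMap.congr_fun hQ.eq y
  have hQy : y - Q y ∈ Q.ker := by simp [hQQ]
  convert Submodule.add_mem_sup (LinearMap.mem_range_self P (Q y)) hQy using 1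
  simp only [LinearMap.sub_apply, Module.End.one_apply, Module.End.mul_apply, hQQ]
  abel

end Module.End

/-- If `P, Q` are continuous linear projections on a real Banach space `X`
whose difference is a compact operator, then `(range P, ker Q)` is a Fredholm pair:
`range P ∩ ker Q` is finite dimensional, `range P + ker Q` is closed, and the quotient
`X / (range P + ker Q)` is finite dimensional. -/
theorem stmt2 {X : Type*} [NormedAddCommGroup X] [NormedSpace ℝ X] [CompleteSpace X]
    (P Q : X →L[ℝ] X) (hP : ∀ x, P (P x) = P x) (hQ : ∀ x, Q (Q x) = Q x)
    (hPQ : IsCompactOperator (fun x => P x - Q x)) :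
    FiniteDimensional ℝ (LinearMap.range (P : X →ₗ[ℝ] X) ⊓ LinearMap.ker (Q : X →ₗ[ℝ] X) : Submodule ℝ X) ∧
    IsClosed ((LinearMap.range (P : X →ₗ[ℝ] X) ⊔ LinearMap.ker (Q : X →ₗ[ℝ] X) : Submodule ℝ X) : Set X) ∧
    FiniteDimensional ℝ
      (X ⧸ (LinearMap.range (P : X →ₗ[ℝ] X) ⊔ LinearMap.ker (Q : X →ₗ[ℝ] X) : Submodule ℝ X)) := by
  have hk₁ : IsCompactOperator ((P - Q) * P : X →L[ℝ] X) := hPQ.comp_clm P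
  have hk₂ : IsCompactOperator ((Q - P) * Q : X →L[ℝ] X) := by
    simpa [Function.comp_def] using hPQ.neg.comp_clm Q
  have hker : P.range ⊓ Q.ker ≤ (1 - (P - Q) * P : X →L[ℝ] X).ker :=
    Module.End.range_inf_ker_le_ker_one_sub_sub_mul (LinearMap.ext hP)
  have hrange : (1 - (Q - P) * Q : X →L[ℝ] X).range ≤ P.range ⊔ Q.ker :=
    Module.End.range_one_sub_sub_mul_le_range_sup_ker (LinearMap.ext hQ)
  have hker_fin := hk₁.finiteDimensional_ker_one_sub
  have hrange_closed := hk₂.isClosed_range_one_sub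
  have hrange_cofin := hk₂.finiteDimensional_quotient_of_range_one_sub_le hrange_closed le_rfl
  have hclosed := Submodule.isClosed_mono_of_finiteDimensional_quotient hrange_closed hrange
  exact ⟨Submodule.finiteDimensional_of_le hker, hclosed,
    hk₂.finiteDimensional_quotient_of_range_one_sub_le hclosed hrange⟩
end

section
/- Let X and Y be real Banach spaces with continuous dual spaces X* and Y*. Let A : X → X* and B : Y → Y* be strictly monotone maps, i.e. (A x₁ − A x₂)(x₁ − x₂) > 0 whenever x₁ ≠ x₂, and (B y₁ − B y₂)(y₁ − y₂) > 0 whenever y₁ ≠ y₂. Let k₁ : X × Y → X* and k₂ : X × Y → Y* be maps, and let f : X × Y → ℝ be Fréchet differentiable with df(u,v)[(ξ,η)] = (A u + k₁(u,v))(ξ) + (−B v + k₂(u,v))(η) for all u, ξ ∈ X and v, η ∈ Y. Suppose (u,v) ∈ X × Y and ξ₀ ∈ X, μ₀ ∈ Y satisfy A ξ₀ = −k₁(u,v) and B μ₀ = k₂(u,v). Then df(u,v)[(ξ₀ − u, v − μ₀)] = −(A u − A ξ₀)(u − ξ₀) − (B v − B μ₀)(v − μ₀) ≤ 0, and equality holds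 if and only if df(u,v) = 0. -/
/-!
With `k₁(u,v) = −Aξ₀` and `k₂(u,v) = Bμ₀`, the differential at `(u,v)` is
`(ξ,η) ↦ (Au − Aξ₀)ξ − (Bv − Bμ₀)η`. Evaluated at `(ξ₀ − u, v − μ₀)` it is minus a sum of two
monotonicity pairings, each nonnegative and zero only on the diagonal; so it vanishes exactly when
`u = ξ₀` and `v = μ₀`, which is exactly when both coefficients, hence the differential, vanish.
-/

def IsStrictlyMonotoneOperator {E : Type*} [AddCommGroup E] [Module ℝ E] [TopologicalSpace E]
    (A : E → E →L[ℝ] ℝ) : Prop :=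
  ∀ x₁ x₂ : E, x₁ ≠ x₂ → 0 < (A x₁ - A x₂) (x₁ - x₂)

namespace IsStrictlyMonotoneOperator

variable {E : Type*} [AddCommGroup E] [Module ℝ E] [TopologicalSpace E]
  {A : E → E →L[ℝ] ℝ}

theorem apply_sub_nonneg (hA : IsStrictlyMonotoneOperator A) (x₁ x₂ : E) :
    0 ≤ (A x₁ - A x₂) (x₁ - x₂) := by
  rcases eq_or_ne x₁ x₂ with rfl | hne
  · simp
  · exact (hA x₁ x₂ hne).le

theorem apply_sub_eq_zero_iff (hA : IsStrictlyMonotoneOperator A) {x₁ x₂ : E} :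
    (A x₁ - A x₂) (x₁ - x₂) = 0 ↔ x₁ = x₂ := by
  refine ⟨fun h => ?_, fun h => by simp [h]⟩
  by_contra hne
  exact (hA x₁ x₂ hne).ne' h

end IsStrictlyMonotoneOperator

theorem stmt3_general {X Y : Type*} [NormedAddCommGroup X] [NormedSpace ℝ X]
    [NormedAddCommGroup Y] [NormedSpace ℝ Y]
    (A : X → X →L[ℝ] ℝ) (B : Y → Y →L[ℝ] ℝ)
    (hA : ∀ x₁ x₂ : X, x₁ ≠ x₂ → 0 < (A x₁ - A x₂) (x₁ - x₂))
    (hB : ∀ y₁ y₂ : Y, y₁ ≠ y₂ → 0 < (B y₁ - B y₂) (y₁ - y₂))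
    (k₁ : X × Y → X →L[ℝ] ℝ) (k₂ : X × Y → Y →L[ℝ] ℝ)
    (f : X × Y → ℝ)
    (hdf : ∀ (u : X) (v : Y) (ξ : X) (η : Y),
      fderiv ℝ f (u, v) (ξ, η) = (A u + k₁ (u, v)) ξ + (-B v + k₂ (u, v)) η)
    (u : X) (v : Y) (ξ₀ : X) (μ₀ : Y)
    (hξ₀ : A ξ₀ = -k₁ (u, v)) (hμ₀ : B μ₀ = k₂ (u, v)) :
    fderiv ℝ f (u, v) (ξ₀ - u, v - μ₀) =
      -((A u - A ξ₀) (u - ξ₀)) - (B v - B μ₀) (v - μ₀) ∧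
    fderiv ℝ f (u, v) (ξ₀ - u, v - μ₀) ≤ 0 ∧
    (fderiv ℝ f (u, v) (ξ₀ - u, v - μ₀) = 0 ↔ fderiv ℝ f (u, v) = 0) := by
  have hdf_eq : fderiv ℝ f (u, v) = (A u - A ξ₀).coprod (B μ₀ - B v) := by
    refine ContinuousLinearMap.ext fun ⟨ξ, η⟩ => ?_
    rw [hdf, ← neg_eq_iff_eq_neg.mpr hξ₀, ← hμ₀]
    simp only [ContinuousLinearMap.coprod_apply, sub_eq_add_neg, add_comm (-B v)]
  have hval : fderiv ℝ f (u, v) (ξ₀ - u, v - μ₀) =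
      -((A u - A ξ₀) (u - ξ₀)) - (B v - B μ₀) (v - μ₀) := by
    rw [hdf_eq, ContinuousLinearMap.coprod_apply, ← neg_sub u, map_neg, ← neg_sub (B v),
      neg_apply]
    ring
  have hA₀ := IsStrictlyMonotoneOperator.apply_sub_nonneg hA u ξ₀
  have hB₀ := IsStrictlyMonotoneOperator.apply_sub_nonneg hB v μ₀
  refine ⟨hval, by linarith, ⟨fun h => ?_, fun h => by simp [h]⟩⟩
  have hsum : (A u - A ξ₀) (u - ξ₀) + (B v - B μ₀) (v - μ₀) = 0 := by linarith
  obtain ⟨hu, hv⟩ := (add_eq_zero_iff_of_nonneg hA₀ hB₀).mp hsum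
  obtain rfl := (IsStrictlyMonotoneOperator.apply_sub_eq_zero_iff hA).mp hu
  obtain rfl := (IsStrictlyMonotoneOperator.apply_sub_eq_zero_iff hB).mp hv
  rw [hdf_eq]
  ext <;> simp

/-- Abstract form of the claim that
`V(u,v) = (−u − D_p⁻¹K_u(u,v), v − D_q⁻¹K_v(u,v))` is gradient-like: if `A`, `B` are
strictly monotone maps into the dual, `df(u,v)[(ξ,η)] = (Au + k₁(u,v))ξ + (−Bv + k₂(u,v))η`,
and `Aξ₀ = −k₁(u,v)`, `Bμ₀ = k₂(u,v)`, then
`df(u,v)[(ξ₀ − u, v − μ₀)] = −(Au − Aξ₀)(u − ξ₀) − (Bv − Bμ₀)(v − μ₀) ≤ 0`,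
with equality iff `df(u,v) = 0`. -/
theorem stmt3 {X Y : Type*} [NormedAddCommGroup X] [NormedSpace ℝ X]
    [NormedAddCommGroup Y] [NormedSpace ℝ Y]
    (A : X → X →L[ℝ] ℝ) (B : Y → Y →L[ℝ] ℝ)
    (hA : ∀ x₁ x₂ : X, x₁ ≠ x₂ → 0 < (A x₁ - A x₂) (x₁ - x₂))
    (hB : ∀ y₁ y₂ : Y, y₁ ≠ y₂ → 0 < (B y₁ - B y₂) (y₁ - y₂))
    (k₁ : X × Y → X →L[ℝ] ℝ) (k₂ : X × Y → Y →L[ℝ] ℝ)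
    (f : X × Y → ℝ) (hf : Differentiable ℝ f)
    (hdf : ∀ (u : X) (v : Y) (ξ : X) (η : Y),
      fderiv ℝ f (u, v) (ξ, η) = (A u + k₁ (u, v)) ξ + (-B v + k₂ (u, v)) η)
    (u : X) (v : Y) (ξ₀ : X) (μ₀ : Y)
    (hξ₀ : A ξ₀ = -k₁ (u, v)) (hμ₀ : B μ₀ = k₂ (u, v)) :
    fderiv ℝ f (u, v) (ξ₀ - u, v - μ₀) =
      -((A u - A ξ₀) (u - ξ₀)) - (B v - B μ₀) (v - μ₀) ∧
    fderiv ℝ f (u, v) (ξ₀ - u, v - μ₀) ≤ 0 ∧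
    (fderiv ℝ f (u, v) (ξ₀ - u, v - μ₀) = 0 ↔ fderiv ℝ f (u, v) = 0) :=
  stmt3_general A B hA hB k₁ k₂ f hdf u v ξ₀ μ₀ hξ₀ hμ₀
end

section
/- Let E and F be real Banach spaces and set X = E × F. Let K : X → X be a continuous map that sends bounded subsets of X to totally bounded subsets and satisfies the linear growth bound ‖K(z)‖ ≤ C(1 + ‖z‖) for all z ∈ X and some constant C ≥ 0. Define the vector field W : X → X by W(u,v) = (−u, v) + K(u,v). Suppose φ : ℝ × X → X is a global flow of W, i.e. φ(0, z) = z for all z and, for each fixed z ∈ X, the curve t ↦ φ(t, z) is differentiable with derivative W(φ(t, z)) at every t ∈ ℝ. Then for every essentially vertical set A ⊆ X and every T ≥ 0, the image φ([0,T] × A) is essentially vertical. -/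
/-!
Grönwall's inequality bounds the trajectories starting in `A` up to time `T`, so the first
components `k(t) = (K (φ (t, z))).1` of `K` along them range over a totally bounded set `B`.
The first component `u` of a trajectory solves `u' = -u + k`, hence `(e^t u)' = e^t k` and a
mean value argument gives `u t = e^{-t} u 0 + (1 - e^{-t}) d` with `d` in the closed convex
hull of `B`. The first projection of the image thus lies in the convex hull of
`π₁ A ∪ closure (convexHull B)`, which is totally bounded.
-/

/-- A subset `A` of a product `E × F` of normed spaces is *essentially vertical* if it is
bounded and its projection onto the first factor is totally bounded. -/
def EssentiallyVertical {E F : Type*} [NormedAddCommGroup E] [NormedAddCommGroup F]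
    (A : Set (E × F)) : Prop :=
  Bornology.IsBounded A ∧ TotallyBounded (Prod.fst '' A)

open Set Real

lemma strictMonoOn_Icc_of_hasDerivAt_pos {f f' : ℝ → ℝ} {a b : ℝ}
    (hf : ∀ r ∈ Icc a b, HasDerivAt f (f' r) r) (hf' : ∀ r ∈ Ioo a b, 0 < f' r) :
    StrictMonoOn f (Icc a b) :=
  strictMonoOn_of_hasDerivWithinAt_pos (convex_Icc a b)
    (fun r hr => (hf r hr).continuousAt.continuousWithinAt)
    (fun r hr => (hf r (interior_subset hr)).hasDerivWithinAt)
    (by rwa [interior_Icc])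

/-- Cauchy mean value theorem, in the form valid for vector-valued `g`. -/
lemma Convex.inv_sub_smul_sub_mem_of_hasDerivAt {E : Type*} [NormedAddCommGroup E]
    [NormedSpace ℝ E] {s : Set E} (hs : Convex ℝ s) (hsc : IsClosed s)
    {f f' : ℝ → ℝ} {g : ℝ → E} {k : ℝ → E} {a b : ℝ} (hab : a < b)
    (hf : ∀ r ∈ Icc a b, HasDerivAt f (f' r) r)
    (hg : ∀ r ∈ Icc a b, HasDerivAt g (f' r • k r) r)
    (hf' : ∀ r ∈ Ioo a b, 0 < f' r) (hk : ∀ r ∈ Ioo a b, k r ∈ s) :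
    (f b - f a)⁻¹ • (g b - g a) ∈ s := by
  have hfab : 0 < f b - f a :=
    sub_pos.2 (strictMonoOn_Icc_of_hasDerivAt_pos hf hf' (left_mem_Icc.2 hab.le)
      (right_mem_Icc.2 hab.le) hab)
  by_contra hy
  obtain ⟨ℓ, c, hℓs, hℓy⟩ := geometric_hahn_banach_closed_point hs hsc hy
  -- `r ↦ c f r - ℓ (g r)` increases, as its derivative is `f' r (c - ℓ (k r)) > 0`.
  have hψ : StrictMonoOn (fun r => c * f r - ℓ (g r)) (Icc a b) := by
    refine strictMonoOn_Icc_of_hasDerivAt_pos (f' := fun r => c * f' r - ℓ (f' r • k r))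
      (fun r hr => ((hf r hr).const_mul c).sub (ℓ.hasFDerivAt.comp_hasDerivAt r (hg r hr)))
      (fun r hr => ?_)
    rw [map_smul, smul_eq_mul]
    linarith [mul_pos (hf' r hr) (sub_pos.2 (hℓs _ (hk r hr)))]
  have hψab := hψ (left_mem_Icc.2 hab.le) (right_mem_Icc.2 hab.le) hab
  rw [map_smul, map_sub, smul_eq_mul, lt_inv_mul_iff₀ hfab] at hℓy
  simp only at hψab
  linarith

lemma mem_convexHull_insert_of_hasDerivAt_neg_add {E : Type*} [NormedAddCommGroup E]
    [NormedSpace ℝ E] {s : Set E} (hs : Convex ℝ s) (hsc : IsClosed s) {u k : ℝ → E} {t : ℝ}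
    (ht : 0 ≤ t) (hu : ∀ r ∈ Icc 0 t, HasDerivAt u (-u r + k r) r)
    (hk : ∀ r ∈ Ioo 0 t, k r ∈ s) :
    u t ∈ convexHull ℝ (insert (u 0) s) := by
  rcases ht.eq_or_lt with rfl | ht
  · exact subset_convexHull ℝ _ (mem_insert _ _)
  have hg : ∀ r ∈ Icc 0 t, HasDerivAt (fun r => exp r • u r) (exp r • k r) r := by
    intro r hr
    refine ((hasDerivAt_exp r).smul (hu r hr)).congr_deriv ?_
    module
  have hd := hs.inv_sub_smul_sub_mem_of_hasDerivAt hsc ht (fun r _ => hasDerivAt_exp r) hg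
    (fun r _ => exp_pos r) hk
  set d := (exp t - exp 0)⁻¹ • (exp t • u t - exp 0 • u 0)
  have hcoef : (1 - exp (-t)) * (exp t - exp 0)⁻¹ = exp (-t) := by
    have : exp t - 1 ≠ 0 := (sub_pos.2 (one_lt_exp_iff.2 ht)).ne'
    rw [exp_neg, exp_zero]
    field_simp
  have hut : u t = exp (-t) • u 0 + (1 - exp (-t)) • d := by
    rw [smul_smul, hcoef, smul_sub, smul_smul, ← exp_add, neg_add_cancel, exp_zero, one_smul,
      one_smul]
    abel
  rw [hut]
  exact convex_convexHull ℝ _ (subset_convexHull ℝ _ (mem_insert _ _))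
    (subset_convexHull ℝ _ (mem_insert_of_mem _ hd)) (exp_pos _).le
    (sub_nonneg.2 (exp_le_one_iff.2 (neg_nonpos.2 ht.le))) (add_sub_cancel _ _)

lemma isBounded_image_Icc_prod_of_norm_le {X : Type*} [NormedAddCommGroup X]
    [NormedSpace ℝ X] {V : X → X} {φ : ℝ × X → X} {a b : ℝ} (ha : 0 ≤ a) (hb : 0 ≤ b)
    (hV : ∀ y, ‖V y‖ ≤ a * ‖y‖ + b) (hφ0 : ∀ z, φ (0, z) = z)
    (hφ' : ∀ z t, HasDerivAt (fun s => φ (s, z)) (V (φ (t, z))) t)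
    {A : Set X} (hA : Bornology.IsBounded A) (T : ℝ) :
    Bornology.IsBounded (φ '' (Icc 0 T ×ˢ A)) := by
  obtain ⟨R, hR, hAR⟩ := hA.exists_pos_norm_le
  refine (Metric.isBounded_closedBall (x := 0) (r := gronwallBound R a b T)).subset ?_
  rintro _ ⟨⟨t, z⟩, ⟨⟨ht0, htT⟩, hz⟩, rfl⟩
  rw [mem_closedBall_zero_iff]
  calc ‖φ (t, z)‖ ≤ gronwallBound R a b (t - 0) :=
        norm_le_gronwallBound_of_norm_deriv_right_le
          (fun r _ => (hφ' z r).continuousAt.continuousWithinAt)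
          (fun r _ => (hφ' z r).hasDerivWithinAt) (by rw [hφ0]; exact hAR z hz)
          (fun r _ => hV _) t ⟨ht0, le_rfl⟩
    _ ≤ gronwallBound R a b T := gronwallBound_mono hR.le hb ha (by linarith)

lemma norm_neg_fst_add_le {E F : Type*} [NormedAddCommGroup E] [NormedAddCommGroup F]
    {K : E × F → E × F} {C : ℝ} (hK : ∀ z, ‖K z‖ ≤ C * (1 + ‖z‖)) (y : E × F) :
    ‖(-y.1, y.2) + K y‖ ≤ (1 + C) * ‖y‖ + C :=
  calc ‖(-y.1, y.2) + K y‖ ≤ ‖y‖ + C * (1 + ‖y‖) :=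
        (norm_add_le _ _).trans (add_le_add (by simp [Prod.norm_def]) (hK y))
    _ = (1 + C) * ‖y‖ + C := by ring

theorem stmt5_general {E F : Type*} [NormedAddCommGroup E] [NormedSpace ℝ E]
    [NormedAddCommGroup F] [NormedSpace ℝ F]
    (K : E × F → E × F)
    (hKcomp : ∀ S : Set (E × F), Bornology.IsBounded S → TotallyBounded (K '' S))
    (C : ℝ) (hC : 0 ≤ C) (hKgrowth : ∀ z : E × F, ‖K z‖ ≤ C * (1 + ‖z‖))
    (W : E × F → E × F) (hW : ∀ z : E × F, W z = (-z.1, z.2) + K z)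
    (φ : ℝ × (E × F) → E × F)
    (hφ0 : ∀ z : E × F, φ (0, z) = z)
    (hφ' : ∀ (z : E × F) (t : ℝ), HasDerivAt (fun s => φ (s, z)) (W (φ (t, z))) t)
    (A : Set (E × F)) (hA : EssentiallyVertical A) (T : ℝ) :
    EssentiallyVertical (φ '' (Set.Icc (0 : ℝ) T ×ˢ A)) := by
  obtain ⟨hAb, hAtb⟩ := hA
  have hWle (y : E × F) : ‖W y‖ ≤ (1 + C) * ‖y‖ + C := hW y ▸ norm_neg_fst_add_le hKgrowth y
  have hbdd := isBounded_image_Icc_prod_of_norm_le (by linarith) hC hWle hφ0 hφ' hAb T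
  refine ⟨hbdd, ?_⟩
  set B := Prod.fst '' (K '' (φ '' (Icc 0 T ×ˢ A)))
  have hB : TotallyBounded B := (hKcomp _ hbdd).image uniformContinuous_fst
  refine (totallyBounded_convexHull.2 (hAtb.union hB.convexHull.closure)).subset ?_
  rintro _ ⟨_, ⟨⟨t, z⟩, ⟨⟨ht0, htT⟩, hz⟩, rfl⟩, rfl⟩
  have hu : ∀ r ∈ Icc 0 t, HasDerivAt (fun s => (φ (s, z)).1)
      (-(φ (r, z)).1 + (K (φ (r, z))).1) r := fun r _ => by
    refine ((ContinuousLinearMap.fst ℝ E F).hasFDerivAt.comp_hasDerivAt r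
      (hφ' z r)).congr_deriv ?_
    simp [hW]
  have hk : ∀ r ∈ Ioo 0 t, (K (φ (r, z))).1 ∈ closure (convexHull ℝ B) := fun r hr =>
    subset_closure <| subset_convexHull ℝ _ <|
      mem_image_of_mem _ <| mem_image_of_mem _ <| mem_image_of_mem _
        ⟨⟨hr.1.le, hr.2.le.trans htT⟩, hz⟩
  have hmem := mem_convexHull_insert_of_hasDerivAt_neg_add (convex_convexHull ℝ B).closure
    isClosed_closure ht0 hu hk
  rw [hφ0] at hmem
  exact convexHull_mono
    (insert_subset (mem_union_left _ (mem_image_of_mem _ hz)) subset_union_right) hmem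

/-- Let `W(u,v) = (−u, v) + K(u,v)` with `K` continuous, compact (bounded sets
are mapped to totally bounded ones), and of at most linear growth. If `φ` is a global flow
of `W`, then for every essentially vertical set `A` and every `T ≥ 0` the image
`φ([0,T] × A)` is essentially vertical. -/
theorem stmt5 {E F : Type*} [NormedAddCommGroup E] [NormedSpace ℝ E] [CompleteSpace E]
    [NormedAddCommGroup F] [NormedSpace ℝ F] [CompleteSpace F]
    (K : E × F → E × F) (hKcont : Continuous K)
    (hKcomp : ∀ S : Set (E × F), Bornology.IsBounded S → TotallyBounded (K '' S))
    (C : ℝ) (hC : 0 ≤ C) (hKgrowth : ∀ z : E × F, ‖K z‖ ≤ C * (1 + ‖z‖))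
    (W : E × F → E × F) (hW : ∀ z : E × F, W z = (-z.1, z.2) + K z)
    (φ : ℝ × (E × F) → E × F)
    (hφ0 : ∀ z : E × F, φ (0, z) = z)
    (hφ' : ∀ (z : E × F) (t : ℝ), HasDerivAt (fun s => φ (s, z)) (W (φ (t, z))) t)
    (A : Set (E × F)) (hA : EssentiallyVertical A) (T : ℝ) (hT : 0 ≤ T) :
    EssentiallyVertical (φ '' (Set.Icc (0 : ℝ) T ×ˢ A)) :=
  stmt5_general K hKcomp C hC hKgrowth W hW φ hφ0 hφ' A hA T
end

section
/- Let n ≥ 1 and let p ≥ 1 be a real number. Then there exists a constant c > 0 such that for all vectors a, b in the Euclidean space ℝⁿ: ⟨(1 + ‖a‖²)^{p−1}·a − (1 + ‖b‖²)^{p−1}·b, a − b⟩ ≥ c·‖a − b‖^{2p}, where ⟨·,·⟩ is the Euclidean inner product. In particular, the map a ↦ (1 + ‖a‖²)^{p−1}·a is strictly monotone. -/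
/-!
Write `A = φ(‖a‖²)`, `B = φ(‖b‖²)` with `φ t = (1 + t)^(p-1)`. Then
`⟪A a - B b, a - b⟫ = (A + B)/2 ‖a - b‖² + (A - B)/2 (‖a‖² - ‖b‖²)`, and the second term is
nonnegative because `φ` is monotone. If `‖b‖ ≤ ‖a‖`, then `‖a‖ ≥ ‖a - b‖/2`, so
`A ≥ φ(‖a - b‖²/4) ≥ (‖a - b‖²/4)^(p-1)`, and the first term is at least
`(‖a - b‖²/4)^(p-1) ‖a - b‖²/2 = 2/4^p ‖a - b‖^(2p)`.
-/

open Set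

section

variable {E : Type*} [NormedAddCommGroup E] [InnerProductSpace ℝ E]

theorem real_inner_smul_sub_smul_sub (A B : ℝ) (a b : E) :
    inner ℝ (A • a - B • b) (a - b) =
      (A + B) / 2 * ‖a - b‖ ^ 2 + (A - B) / 2 * (‖a‖ ^ 2 - ‖b‖ ^ 2) := by
  simp only [inner_sub_left, inner_sub_right, real_inner_smul_left, real_inner_self_eq_norm_sq,
    real_inner_comm a b, norm_sub_sq_real]
  ring

variable {φ : ℝ → ℝ}

theorem le_real_inner_smul_sub_smul_sub_of_norm_le (hφ : MonotoneOn φ (Ici 0))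
    (hφ_nonneg : ∀ t, 0 ≤ t → 0 ≤ φ t) {a b : E} (hba : ‖b‖ ≤ ‖a‖) :
    φ (‖a - b‖ ^ 2 / 4) * ‖a - b‖ ^ 2 / 2 ≤
      inner ℝ (φ (‖a‖ ^ 2) • a - φ (‖b‖ ^ 2) • b) (a - b) := by
  have hsq : ‖b‖ ^ 2 ≤ ‖a‖ ^ 2 := pow_le_pow_left₀ (norm_nonneg b) hba 2
  have hdist : ‖a - b‖ ^ 2 / 4 ≤ ‖a‖ ^ 2 := by
    have : ‖a - b‖ ≤ 2 * ‖a‖ := (norm_sub_le a b).trans (by linarith)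
    nlinarith [norm_nonneg (a - b)]
  have hφa : φ (‖a - b‖ ^ 2 / 4) ≤ φ (‖a‖ ^ 2) :=
    hφ (mem_Ici.2 (by positivity)) (mem_Ici.2 (by positivity)) hdist
  have hφb : φ (‖b‖ ^ 2) ≤ φ (‖a‖ ^ 2) :=
    hφ (mem_Ici.2 (by positivity)) (mem_Ici.2 (by positivity)) hsq
  have hφb_nonneg : 0 ≤ φ (‖b‖ ^ 2) := hφ_nonneg _ (by positivity)
  rw [real_inner_smul_sub_smul_sub]
  nlinarith [mul_nonneg (sub_nonneg.2 hφb) (sub_nonneg.2 hsq),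
    mul_nonneg hφb_nonneg (sq_nonneg ‖a - b‖), mul_le_mul_of_nonneg_right hφa (sq_nonneg ‖a - b‖)]

theorem le_real_inner_smul_sub_smul_sub (hφ : MonotoneOn φ (Ici 0))
    (hφ_nonneg : ∀ t, 0 ≤ t → 0 ≤ φ t) (a b : E) :
    φ (‖a - b‖ ^ 2 / 4) * ‖a - b‖ ^ 2 / 2 ≤
      inner ℝ (φ (‖a‖ ^ 2) • a - φ (‖b‖ ^ 2) • b) (a - b) := by
  rcases le_total ‖b‖ ‖a‖ with hba | hab
  · exact le_real_inner_smul_sub_smul_sub_of_norm_le hφ hφ_nonneg hba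
  · have := le_real_inner_smul_sub_smul_sub_of_norm_le hφ hφ_nonneg hab
    rwa [← neg_sub a b, norm_neg, ← neg_sub (φ (‖a‖ ^ 2) • a), inner_neg_neg] at this

end

theorem monotoneOn_one_add_rpow {q : ℝ} (hq : 0 ≤ q) :
    MonotoneOn (fun t : ℝ => (1 + t) ^ q) (Ici 0) := fun s hs t _ hst =>
  Real.rpow_le_rpow (by simp only [mem_Ici] at hs; linarith) (by linarith) hq

theorem two_div_four_rpow_mul_rpow_le {p d : ℝ} (hp : 1 ≤ p) (hd : 0 ≤ d) :
    2 / 4 ^ p * d ^ (2 * p) ≤ (1 + d ^ 2 / 4) ^ (p - 1) * d ^ 2 / 2 := by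
  have hs : 0 ≤ d ^ 2 / 4 := by positivity
  have hpow : (d ^ 2 / 4) ^ (p - 1) * (d ^ 2 / 4) = d ^ (2 * p) / 4 ^ p := by
    rw [← Real.rpow_add_one' hs (by linarith), sub_add_cancel,
      Real.div_rpow (sq_nonneg d) (by norm_num), Real.rpow_mul hd, Real.rpow_two]
  have hmono : (d ^ 2 / 4) ^ (p - 1) ≤ (1 + d ^ 2 / 4) ^ (p - 1) :=
    Real.rpow_le_rpow hs (by linarith) (by linarith)
  calc 2 / 4 ^ p * d ^ (2 * p) = 2 * ((d ^ 2 / 4) ^ (p - 1) * (d ^ 2 / 4)) := by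
        rw [hpow]; ring
    _ ≤ 2 * ((1 + d ^ 2 / 4) ^ (p - 1) * (d ^ 2 / 4)) := by gcongr
    _ = (1 + d ^ 2 / 4) ^ (p - 1) * d ^ 2 / 2 := by ring

theorem stmt10_general (n : ℕ) (p : ℝ) (hp : 1 ≤ p) :
    (∃ c : ℝ, 0 < c ∧ ∀ a b : EuclideanSpace ℝ (Fin n),
      c * ‖a - b‖ ^ (2 * p) ≤
        (inner ℝ ((1 + ‖a‖ ^ 2) ^ (p - 1) • a - (1 + ‖b‖ ^ 2) ^ (p - 1) • b) (a - b) : ℝ)) ∧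
    ∀ a b : EuclideanSpace ℝ (Fin n), a ≠ b →
      (0 : ℝ) <
        inner ℝ ((1 + ‖a‖ ^ 2) ^ (p - 1) • a - (1 + ‖b‖ ^ 2) ^ (p - 1) • b) (a - b) := by
  have hc : (0 : ℝ) < 2 / 4 ^ p := by positivity
  have hbound (a b : EuclideanSpace ℝ (Fin n)) :
      2 / 4 ^ p * ‖a - b‖ ^ (2 * p) ≤
        inner ℝ ((1 + ‖a‖ ^ 2) ^ (p - 1) • a - (1 + ‖b‖ ^ 2) ^ (p - 1) • b) (a - b) :=
    (two_div_four_rpow_mul_rpow_le hp (norm_nonneg _)).trans <|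
      le_real_inner_smul_sub_smul_sub (monotoneOn_one_add_rpow (by linarith))
        (fun t ht => by positivity) a b
  refine ⟨⟨_, hc, hbound⟩, fun a b hab => (hbound a b).trans_lt' ?_⟩
  exact mul_pos hc (Real.rpow_pos_of_pos (norm_pos_iff.2 (sub_ne_zero.2 hab)) _)

/-- For `n ≥ 1` and a real exponent `p ≥ 1`, there is `c > 0` such that for
all `a, b ∈ ℝⁿ`: `⟨(1 + ‖a‖²)^{p−1}a − (1 + ‖b‖²)^{p−1}b, a − b⟩ ≥ c‖a − b‖^{2p}`.
In particular the map `a ↦ (1 + ‖a‖²)^{p−1}a` is strictly monotone. -/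
theorem stmt10 (n : ℕ) (hn : 1 ≤ n) (p : ℝ) (hp : 1 ≤ p) :
    (∃ c : ℝ, 0 < c ∧ ∀ a b : EuclideanSpace ℝ (Fin n),
      c * ‖a - b‖ ^ (2 * p) ≤
        (inner ℝ ((1 + ‖a‖ ^ 2) ^ (p - 1) • a - (1 + ‖b‖ ^ 2) ^ (p - 1) • b) (a - b) : ℝ)) ∧
    ∀ a b : EuclideanSpace ℝ (Fin n), a ≠ b →
      (0 : ℝ) <
        inner ℝ ((1 + ‖a‖ ^ 2) ^ (p - 1) • a - (1 + ‖b‖ ^ 2) ^ (p - 1) • b) (a - b) :=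
  stmt10_general n p hp
end
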